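/- Let N ≥ 2 and R > 0, and consider the operator 𝒫⁻₁ (i.e. k = 1 and H ≡ 0) on the ball Ω = B_R(0) ⊂ ℝ^N. Then: (a) the function ψ₁(x) = −cos(π|x|/(2R)) is twice continuously differentiable on cl(B_R(0)), negative in B_R(0), zero on ∂B_R(0), and satisfies the pointwise identity 𝒫⁻₁(D²ψ₁(x)) + (π/(2R))² ψ₁(x) = 0 for every x ∈ B_R(0); (b) μ₁⁻(B_R(0)) = (π/(2R))². -/

import Mathlib

open Metric Filter Topology Set

/-- `𝒫⁻ₖ(D²φ(x))`: the sum of the `k` smallest eigenvalues of the Hessian of `φ` at `x`,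
expressed through the min-max representation over orthonormal `k`-frames. -/
noncomputable def Pminus {N : ℕ} (k : ℕ) (φ : EuclideanSpace ℝ (Fin N) → ℝ)
    (x : EuclideanSpace ℝ (Fin N)) : ℝ :=
  sInf {s : ℝ | ∃ ξ : Fin k → EuclideanSpace ℝ (Fin N), Orthonormal ℝ ξ ∧
    s = ∑ i, iteratedFDeriv ℝ 2 φ x ![ξ i, ξ i]}

/-- `𝒫⁺ₖ(D²φ(x))`: the sum of the `k` largest eigenvalues of the Hessian of `φ` at `x`. -/
noncomputable def Pplus {N : ℕ} (k : ℕ) (φ : EuclideanSpace ℝ (Fin N) → ℝ)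
    (x : EuclideanSpace ℝ (Fin N)) : ℝ :=
  sSup {s : ℝ | ∃ ξ : Fin k → EuclideanSpace ℝ (Fin N), Orthonormal ℝ ξ ∧
    s = ∑ i, iteratedFDeriv ℝ 2 φ x ![ξ i, ξ i]}

/-- Viscosity subsolution of `P(D²u) + H(x,∇u) + μ u = f(x)` in `Ω`:
for every `x₀ ∈ Ω` and every `C²` test function `φ` such that `u - φ` has a local
maximum (relative to `Ω`) at `x₀`, one has `P(D²φ(x₀)) + H(x₀,∇φ(x₀)) + μ u(x₀) ≥ f(x₀)`. -/
def IsViscSubsol {N : ℕ}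
    (P : (EuclideanSpace ℝ (Fin N) → ℝ) → EuclideanSpace ℝ (Fin N) → ℝ)
    (Ω : Set (EuclideanSpace ℝ (Fin N)))
    (H : EuclideanSpace ℝ (Fin N) → EuclideanSpace ℝ (Fin N) → ℝ)
    (μ : ℝ) (f : EuclideanSpace ℝ (Fin N) → ℝ)
    (u : EuclideanSpace ℝ (Fin N) → ℝ) : Prop :=
  ∀ x₀ ∈ Ω, ∀ φ : EuclideanSpace ℝ (Fin N) → ℝ, ContDiffAt ℝ 2 φ x₀ →
    IsLocalMaxOn (fun x => u x - φ x) Ω x₀ →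
    f x₀ ≤ P φ x₀ + H x₀ (gradient φ x₀) + μ * u x₀

/-- Viscosity supersolution of `P(D²u) + H(x,∇u) + μ u = f(x)` in `Ω`. -/
def IsViscSupersol {N : ℕ}
    (P : (EuclideanSpace ℝ (Fin N) → ℝ) → EuclideanSpace ℝ (Fin N) → ℝ)
    (Ω : Set (EuclideanSpace ℝ (Fin N)))
    (H : EuclideanSpace ℝ (Fin N) → EuclideanSpace ℝ (Fin N) → ℝ)
    (μ : ℝ) (f : EuclideanSpace ℝ (Fin N) → ℝ)
    (u : EuclideanSpace ℝ (Fin N) → ℝ) : Prop :=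
  ∀ x₀ ∈ Ω, ∀ φ : EuclideanSpace ℝ (Fin N) → ℝ, ContDiffAt ℝ 2 φ x₀ →
    IsLocalMinOn (fun x => u x - φ x) Ω x₀ →
    P φ x₀ + H x₀ (gradient φ x₀) + μ * u x₀ ≤ f x₀

/-- Structure condition (SC1): `|H(x,ξ)| ≤ b‖ξ‖`. -/
def SC1 {N : ℕ} (Ω : Set (EuclideanSpace ℝ (Fin N)))
    (H : EuclideanSpace ℝ (Fin N) → EuclideanSpace ℝ (Fin N) → ℝ) (b : ℝ) : Prop :=
  ∀ x ∈ Ω, ∀ ξ : EuclideanSpace ℝ (Fin N), |H x ξ| ≤ b * ‖ξ‖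

/-- Structure condition (SC2): positive 1-homogeneity in the gradient variable. -/
def SC2 {N : ℕ} (Ω : Set (EuclideanSpace ℝ (Fin N)))
    (H : EuclideanSpace ℝ (Fin N) → EuclideanSpace ℝ (Fin N) → ℝ) : Prop :=
  ∀ x ∈ Ω, ∀ t : ℝ, 0 ≤ t → ∀ ξ : EuclideanSpace ℝ (Fin N), H x (t • ξ) = t * H x ξ

/-- Structure condition (SC3): uniform continuity in `x` through a modulus of continuity. -/
def SC3 {N : ℕ} (Ω : Set (EuclideanSpace ℝ (Fin N)))
    (H : EuclideanSpace ℝ (Fin N) → EuclideanSpace ℝ (Fin N) → ℝ) : Prop :=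
  ∃ ω : ℝ → ℝ, Monotone ω ∧ Filter.Tendsto ω (𝓝[>] (0 : ℝ)) (𝓝 (0 : ℝ)) ∧
    ∀ x ∈ Ω, ∀ y ∈ Ω, ∀ ξ : EuclideanSpace ℝ (Fin N),
      |H x ξ - H y ξ| ≤ ω (‖x - y‖ * (1 + ‖ξ‖))

/-- `Ω ∈ 𝒞_R`: a "hula hoop" domain, i.e. an intersection of a nonempty family of
open balls of the common radius `R`. -/
def HulaHoop {N : ℕ} (R : ℝ) (Ω : Set (EuclideanSpace ℝ (Fin N))) : Prop :=
  ∃ Y : Set (EuclideanSpace ℝ (Fin N)), Y.Nonempty ∧ Ω = ⋂ y ∈ Y, ball y R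

/-- `μ̄ₖ⁻(Ω)`: the supremum (in `EReal`) of those `μ` for which there is an upper
semicontinuous `w < 0` on `cl(Ω)` which is a viscosity subsolution of
`𝒫⁻ₖ(D²w) + H(x,∇w) + μ w = 0` in `Ω`. -/
noncomputable def muBarMinus {N : ℕ} (k : ℕ) (Ω : Set (EuclideanSpace ℝ (Fin N)))
    (H : EuclideanSpace ℝ (Fin N) → EuclideanSpace ℝ (Fin N) → ℝ) : EReal :=
  sSup {m : EReal | ∃ μ : ℝ, m = (μ : EReal) ∧ ∃ w : EuclideanSpace ℝ (Fin N) → ℝ,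
    UpperSemicontinuousOn w (closure Ω) ∧ (∀ x ∈ closure Ω, w x < 0) ∧
    IsViscSubsol (Pminus k) Ω H μ (fun _ => 0) w}

/-- `μₖ⁻(Ω)`: as `μ̄ₖ⁻(Ω)`, but only requiring `w < 0` (and upper semicontinuous) in `Ω`. -/
noncomputable def muMinus {N : ℕ} (k : ℕ) (Ω : Set (EuclideanSpace ℝ (Fin N)))
    (H : EuclideanSpace ℝ (Fin N) → EuclideanSpace ℝ (Fin N) → ℝ) : EReal :=
  sSup {m : EReal | ∃ μ : ℝ, m = (μ : EReal) ∧ ∃ w : EuclideanSpace ℝ (Fin N) → ℝ,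
    UpperSemicontinuousOn w Ω ∧ (∀ x ∈ Ω, w x < 0) ∧
    IsViscSubsol (Pminus k) Ω H μ (fun _ => 0) w}

/-- `μ̄ₖ⁺(Ω)`: the supremum (in `EReal`) of those `μ` for which there is a lower
semicontinuous `w > 0` on `cl(Ω)` which is a viscosity supersolution of
`𝒫⁻ₖ(D²w) + H(x,∇w) + μ w = 0` in `Ω`. -/
noncomputable def muBarPlus {N : ℕ} (k : ℕ) (Ω : Set (EuclideanSpace ℝ (Fin N)))
    (H : EuclideanSpace ℝ (Fin N) → EuclideanSpace ℝ (Fin N) → ℝ) : EReal :=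
  sSup {m : EReal | ∃ μ : ℝ, m = (μ : EReal) ∧ ∃ w : EuclideanSpace ℝ (Fin N) → ℝ,
    LowerSemicontinuousOn w (closure Ω) ∧ (∀ x ∈ closure Ω, 0 < w x) ∧
    IsViscSupersol (Pminus k) Ω H μ (fun _ => 0) w}

/-- `μₖ⁺(Ω)`: as `μ̄ₖ⁺(Ω)`, but only requiring `w > 0` (and lower semicontinuous) in `Ω`. -/
noncomputable def muPlus {N : ℕ} (k : ℕ) (Ω : Set (EuclideanSpace ℝ (Fin N)))
    (H : EuclideanSpace ℝ (Fin N) → EuclideanSpace ℝ (Fin N) → ℝ) : EReal :=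
  sSup {m : EReal | ∃ μ : ℝ, m = (μ : EReal) ∧ ∃ w : EuclideanSpace ℝ (Fin N) → ℝ,
    LowerSemicontinuousOn w Ω ∧ (∀ x ∈ Ω, 0 < w x) ∧
    IsViscSupersol (Pminus k) Ω H μ (fun _ => 0) w}

/-!
With `c = π / (2R)`, `ψ(x) = -cos (c‖x‖)` is smooth (as `cos` is even, `cos (c‖x‖)` is an entire
function of `c²‖x‖²`). At `x ≠ 0` its Hessian has the eigenvalue `c² cos (c‖x‖)` in the radial
direction and `c sin (c‖x‖) / ‖x‖` in the tangential ones; since `θ ≤ tan θ` on `[0, π/2)` the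
radial one is the smallest, so `𝒫⁻₁(D²ψ) = -c² ψ`. Hence `ψ` is a negative classical, and so
viscosity, subsolution for `μ = c²`, giving `μ₁⁻ ≥ c²`.

Conversely let `w < 0` be a subsolution for `μ` and `c' > c`. On the closed ball of radius
`π / (2c')` take the largest `t ≥ 0` with `w ≤ t ψ_{c'}`. Since `ψ_{c'}` vanishes on the boundary
sphere while `w < 0`, the function `t ψ_{c'}` touches `w` from above at an interior point, and
testing there gives `t cos (c'‖x‖) (c'² - μ) ≥ 0`, i.e. `μ ≤ c'²`. Letting `c' → c` gives
`μ ≤ c²`.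
-/

open Real

noncomputable def cosSqrtCoeff (n : ℕ) : ℝ := (-1) ^ n / (2 * n).factorial

lemma radius_ofScalars_cosSqrtCoeff :
    (FormalMultilinearSeries.ofScalars ℝ cosSqrtCoeff).radius = ⊤ := by
  refine FormalMultilinearSeries.radius_eq_top_of_summable_norm _ fun r => ?_
  refine (Real.summable_pow_div_factorial r).of_nonneg_of_le (fun n => by positivity) fun n => ?_
  rw [FormalMultilinearSeries.ofScalars_norm, cosSqrtCoeff, norm_div, norm_pow, norm_neg, norm_one,
    one_pow, Real.norm_natCast, one_div_mul_eq_div]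
  exact div_le_div_of_nonneg_left (by positivity) (by positivity)
    (mod_cast Nat.factorial_le (by omega))

/-- `s ↦ cos √s`, extended to an entire function of `s`. -/
noncomputable def cosSqrt : ℝ → ℝ := FormalMultilinearSeries.ofScalarsSum cosSqrtCoeff

lemma cosSqrt_sq (t : ℝ) : cosSqrt (t ^ 2) = cos t := by
  rw [cos_eq_tsum, cosSqrt, FormalMultilinearSeries.ofScalars_sum_eq]
  refine tsum_congr fun n => ?_
  rw [smul_eq_mul, ← pow_mul, cosSqrtCoeff]
  ring

lemma contDiff_cosSqrt {n : WithTop ℕ∞} : ContDiff ℝ n cosSqrt := by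
  have h := (FormalMultilinearSeries.ofScalars ℝ cosSqrtCoeff).hasFPowerSeriesOnBall
    (by rw [radius_ofScalars_cosSqrtCoeff]; exact ENNReal.zero_lt_top)
  rw [radius_ofScalars_cosSqrtCoeff] at h
  exact contDiff_iff_contDiffAt.2 fun s => (h.analyticAt_of_mem (by simp)).contDiffAt


section SecondDerivative

variable {E : Type*} [NormedAddCommGroup E] [NormedSpace ℝ E]

lemma hasDerivAt_line (x ξ : E) (t : ℝ) : HasDerivAt (fun t : ℝ => x + t • ξ) ξ t := by
  simpa using ((hasDerivAt_id t).smul_const ξ).const_add x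

lemma tendsto_line (x ξ : E) : Tendsto (fun t : ℝ => x + t • ξ) (𝓝 0) (𝓝 x) := by
  simpa using (hasDerivAt_line x ξ 0).continuousAt.tendsto

lemma iteratedFDeriv_two_apply_eq_deriv_deriv_line {f : E → ℝ} {x : E}
    (hf : ContDiffAt ℝ 2 f x) (ξ : E) :
    iteratedFDeriv ℝ 2 f x ![ξ, ξ] = deriv (deriv fun t : ℝ => f (x + t • ξ)) 0 := by
  have hderiv : deriv (fun t : ℝ => f (x + t • ξ)) =ᶠ[𝓝 0]
      fun t => fderiv ℝ f (x + t • ξ) ξ := by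
    filter_upwards [(tendsto_line x ξ).eventually (hf.eventually (by simp))] with t ht
    exact ((ht.differentiableAt two_ne_zero).hasFDerivAt.comp_hasDerivAt t
      (hasDerivAt_line x ξ t)).deriv
  have hfderiv : HasFDerivAt (fderiv ℝ f) (fderiv ℝ (fderiv ℝ f) x) (x + (0 : ℝ) • ξ) := by
    rw [zero_smul, add_zero]
    exact ((hf.fderiv_right (m := 1) le_rfl).differentiableAt one_ne_zero).hasFDerivAt
  have h2 : HasDerivAt (fun t : ℝ => fderiv ℝ f (x + t • ξ) ξ)
      (fderiv ℝ (fderiv ℝ f) x ξ ξ) 0 :=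
    (ContinuousLinearMap.apply ℝ ℝ ξ).hasFDerivAt.comp_hasDerivAt 0
      (hfderiv.comp_hasDerivAt 0 (hasDerivAt_line x ξ 0))
  rw [hderiv.deriv_eq, h2.deriv, iteratedFDeriv_two_apply]
  simp

lemma IsLocalMax.deriv_deriv_nonpos {f : ℝ → ℝ} {a : ℝ} (h : IsLocalMax f a)
    (hf : ContinuousAt f a) : deriv (deriv f) a ≤ 0 := by
  by_contra! hpos
  have hconst : f =ᶠ[𝓝 a] fun _ => f a := by
    filter_upwards [h, isLocalMin_of_deriv_deriv_pos hpos h.deriv_eq_zero hf] with x h₁ h₂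
    exact le_antisymm h₁ h₂
  have hderiv : deriv f =ᶠ[𝓝 a] fun _ => 0 := by
    filter_upwards [hconst.eventuallyEq_nhds] with x hx
    rw [hx.deriv_eq, deriv_const]
  rw [hderiv.deriv_eq, deriv_const] at hpos
  exact hpos.false

lemma iteratedFDeriv_two_le_of_isLocalMax_sub {ψ φ : E → ℝ} {x : E}
    (hψ : ContDiffAt ℝ 2 ψ x) (hφ : ContDiffAt ℝ 2 φ x)
    (hmax : IsLocalMax (fun y => ψ y - φ y) x) (ξ : E) :
    iteratedFDeriv ℝ 2 ψ x ![ξ, ξ] ≤ iteratedFDeriv ℝ 2 φ x ![ξ, ξ] := by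
  have hline := tendsto_line x ξ
  have hmax_line : IsLocalMax (fun t : ℝ => ψ (x + t • ξ) - φ (x + t • ξ)) 0 :=
    (hline.eventually hmax).mono fun t ht => by simpa using ht
  rw [← sub_nonpos, ← sub_apply, ← fun_iteratedFDeriv_sub_apply hψ hφ,
    iteratedFDeriv_two_apply_eq_deriv_deriv_line (hψ.sub hφ)]
  exact hmax_line.deriv_deriv_nonpos
    (by simpa [ContinuousAt, Function.comp_def] using (hψ.sub hφ).continuousAt.tendsto.comp hline)

end SecondDerivative

section Radial

variable {E : Type*} [NormedAddCommGroup E] [InnerProductSpace ℝ E]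

open RealInnerProductSpace

lemma HasDerivAt.norm_of_ne_zero {f : ℝ → E} {f' : E} {t : ℝ} (hf : HasDerivAt f f' t)
    (h0 : f t ≠ 0) : HasDerivAt (fun s => ‖f s‖) (⟪f t, f'⟫ / ‖f t‖) t := by
  have h := hf.norm_sq.sqrt (by positivity)
  simp only [sqrt_sq (norm_nonneg _)] at h
  convert h using 1
  field_simp

lemma deriv_deriv_comp_norm_line {h h' : ℝ → ℝ} {h'' : ℝ} {x : E} (ξ : E) (hx : x ≠ 0)
    (hh : ∀ᶠ s in 𝓝 ‖x‖, HasDerivAt h (h' s) s) (hh' : HasDerivAt h' h'' ‖x‖) :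
    deriv (deriv fun t : ℝ => h ‖x + t • ξ‖) 0 =
      h'' * (⟪x, ξ⟫ / ‖x‖) ^ 2 + h' ‖x‖ * (‖ξ‖ ^ 2 - (⟪x, ξ⟫ / ‖x‖) ^ 2) / ‖x‖ := by
  have hderiv : deriv (fun t : ℝ => h ‖x + t • ξ‖) =ᶠ[𝓝 0]
      fun t => h' ‖x + t • ξ‖ * (⟪x + t • ξ, ξ⟫ / ‖x + t • ξ‖) := by
    filter_upwards [(tendsto_line x ξ).eventually (eventually_ne_nhds hx),
      (tendsto_line x ξ).norm.eventually hh] with t hne hht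
    exact (hht.comp t ((hasDerivAt_line x ξ t).norm_of_ne_zero hne)).deriv
  have hnorm : HasDerivAt (fun t : ℝ => ‖x + t • ξ‖) (⟪x, ξ⟫ / ‖x‖) 0 := by
    simpa using (hasDerivAt_line x ξ 0).norm_of_ne_zero (by simpa using hx)
  have hinner : HasDerivAt (fun t : ℝ => ⟪x + t • ξ, ξ⟫) (‖ξ‖ ^ 2) 0 := by
    simpa [real_inner_self_eq_norm_sq] using
      (hasDerivAt_line x ξ 0).inner ℝ (hasDerivAt_const (0 : ℝ) ξ)
  have hh'_line : HasDerivAt (fun t : ℝ => h' ‖x + t • ξ‖) (h'' * (⟪x, ξ⟫ / ‖x‖)) 0 :=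
    hh'.comp_of_eq 0 hnorm (by simp)
  rw [hderiv.deriv_eq, (hh'_line.fun_mul (hinner.fun_div hnorm (by simpa using hx))).deriv]
  simp only [zero_smul, add_zero]
  field_simp

end Radial

section NegCosNorm

lemma hasDerivAt_mul_neg_cos (a k t : ℝ) :
    HasDerivAt (fun s => a * -cos (k * s)) (a * (k * sin (k * t))) t := by
  refine ((((hasDerivAt_cos _).comp t ((hasDerivAt_id t).const_mul k)).neg).const_mul
    a).congr_deriv ?_
  simp only [id, mul_one]
  ring

lemma hasDerivAt_mul_sin (a k t : ℝ) :
    HasDerivAt (fun s => a * (k * sin (k * s))) (a * (k ^ 2 * cos (k * t))) t := by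
  refine ((((hasDerivAt_sin _).comp t ((hasDerivAt_id t).const_mul k)).const_mul
    k).const_mul a).congr_deriv ?_
  simp only [id, mul_one]
  ring

variable {E : Type*} [NormedAddCommGroup E] (a c : ℝ)

noncomputable def negCosNorm (x : E) : ℝ := a * -cos (c * ‖x‖)

lemma negCosNorm_one_neg {c : ℝ} (hc : 0 ≤ c) {x : E} (hx : c * ‖x‖ < π / 2) :
    negCosNorm 1 c x < 0 := by
  rw [negCosNorm, one_mul, neg_lt_zero]
  exact cos_pos_of_mem_Ioo ⟨by linarith [pi_pos, mul_nonneg hc (norm_nonneg x)], hx⟩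

variable [InnerProductSpace ℝ E]

open RealInnerProductSpace

lemma contDiff_negCosNorm {n : WithTop ℕ∞} : ContDiff ℝ n (negCosNorm a c : E → ℝ) := by
  have : (negCosNorm a c : E → ℝ) = fun x => a * -cosSqrt (c ^ 2 * ‖x‖ ^ 2) := by
    funext x
    rw [negCosNorm, ← mul_pow, cosSqrt_sq]
  rw [this]
  exact contDiff_const.mul (contDiff_cosSqrt.comp (contDiff_const.mul (contDiff_norm_sq ℝ))).neg

lemma iteratedFDeriv_two_negCosNorm_zero (ξ : E) :
    iteratedFDeriv ℝ 2 (negCosNorm a c) (0 : E) ![ξ, ξ] = a * (c * ‖ξ‖) ^ 2 := by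
  rw [iteratedFDeriv_two_apply_eq_deriv_deriv_line (contDiff_negCosNorm a c).contDiffAt]
  have hline : (fun t : ℝ => negCosNorm a c ((0 : E) + t • ξ)) =
      fun t => a * -cos (c * ‖ξ‖ * t) := by
    funext t
    rw [negCosNorm, zero_add, norm_smul, Real.norm_eq_abs]
    rcases abs_choice t with ht | ht <;> rw [ht]
    · ring_nf
    · rw [← cos_neg]; ring_nf
  have hderiv : deriv (fun t => a * -cos (c * ‖ξ‖ * t)) =
      fun t => a * (c * ‖ξ‖ * sin (c * ‖ξ‖ * t)) :=
    funext fun t => (hasDerivAt_mul_neg_cos a _ t).deriv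
  rw [hline, hderiv, (hasDerivAt_mul_sin a _ 0).deriv]
  simp

lemma iteratedFDeriv_two_negCosNorm {x : E} (hx : x ≠ 0) (ξ : E) :
    iteratedFDeriv ℝ 2 (negCosNorm a c) x ![ξ, ξ] =
      a * (c ^ 2 * cos (c * ‖x‖)) * (⟪x, ξ⟫ / ‖x‖) ^ 2 +
        a * (c * sin (c * ‖x‖)) * (‖ξ‖ ^ 2 - (⟪x, ξ⟫ / ‖x‖) ^ 2) / ‖x‖ := by
  rw [iteratedFDeriv_two_apply_eq_deriv_deriv_line (contDiff_negCosNorm a c).contDiffAt]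
  exact deriv_deriv_comp_norm_line (h := fun s => a * -cos (c * s)) ξ hx
    (Eventually.of_forall fun s => hasDerivAt_mul_neg_cos a c s) (hasDerivAt_mul_sin a c _)

lemma mul_cos_le_iteratedFDeriv_two_negCosNorm {a c : ℝ} (ha : 0 ≤ a) (hc : 0 < c) {x ξ : E}
    (hx : c * ‖x‖ < π / 2) (hξ : ‖ξ‖ = 1) :
    a * (c ^ 2 * cos (c * ‖x‖)) ≤ iteratedFDeriv ℝ 2 (negCosNorm a c) x ![ξ, ξ] := by
  rcases eq_or_ne x 0 with rfl | hx0
  · simp [iteratedFDeriv_two_negCosNorm_zero, hξ]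
  rw [iteratedFDeriv_two_negCosNorm a c hx0, hξ]
  have hr : 0 < ‖x‖ := norm_pos_iff.2 hx0
  set θ := c * ‖x‖
  set s := (⟪x, ξ⟫ / ‖x‖) ^ 2
  have hs : s ≤ 1 := by
    refine (sq_le_one_iff_abs_le_one _).2 ?_
    rw [abs_div, abs_of_pos hr, div_le_one hr]
    simpa [hξ] using abs_real_inner_le_norm x ξ
  have hcos : 0 < cos θ := cos_pos_of_mem_Ioo ⟨by linarith [pi_pos, mul_pos hc hr], hx⟩
  have htan : θ * cos θ ≤ sin θ := by
    have := le_tan (by positivity) hx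
    rwa [tan_eq_sin_div_cos, le_div_iff₀ hcos] at this
  have key : c ^ 2 * cos θ ≤ c * sin θ / ‖x‖ := by
    rw [le_div_iff₀ hr]
    nlinarith
  calc a * (c ^ 2 * cos θ)
      = a * (c ^ 2 * cos θ) * s + a * (c ^ 2 * cos θ) * (1 - s) := by ring
    _ ≤ a * (c ^ 2 * cos θ) * s + a * (c * sin θ / ‖x‖) * (1 - s) := by
      gcongr
    _ = _ := by ring

lemma exists_iteratedFDeriv_two_negCosNorm_eq [Nontrivial E] (x : E) :
    ∃ ξ : E, ‖ξ‖ = 1 ∧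
      iteratedFDeriv ℝ 2 (negCosNorm a c) x ![ξ, ξ] = a * (c ^ 2 * cos (c * ‖x‖)) := by
  rcases eq_or_ne x 0 with rfl | hx0
  · obtain ⟨ξ, hξ⟩ := exists_norm_eq E zero_le_one
    exact ⟨ξ, hξ, by simp [iteratedFDeriv_two_negCosNorm_zero, hξ]⟩
  have hr : ‖x‖ ≠ 0 := norm_ne_zero_iff.2 hx0
  refine ⟨‖x‖⁻¹ • x, by rw [norm_smul, norm_inv, norm_norm, inv_mul_cancel₀ hr], ?_⟩
  rw [iteratedFDeriv_two_negCosNorm a c hx0, norm_smul, norm_inv, norm_norm, inv_mul_cancel₀ hr,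
    real_inner_smul_right, real_inner_self_eq_norm_sq]
  field_simp
  ring

end NegCosNorm

section Pminus

variable {N : ℕ}

lemma Pminus_one_eq_sInf (φ : EuclideanSpace ℝ (Fin N) → ℝ) (x : EuclideanSpace ℝ (Fin N)) :
    Pminus 1 φ x = sInf ((fun ξ => iteratedFDeriv ℝ 2 φ x ![ξ, ξ]) '' sphere 0 1) := by
  rw [Pminus]
  congr 1
  ext s
  constructor
  · rintro ⟨ξ, hξ, rfl⟩
    exact ⟨ξ 0, by simpa using hξ.1 0, by simp⟩
  · rintro ⟨ξ, hξ, rfl⟩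
    refine ⟨fun _ => ξ, ⟨fun _ => by simpa using hξ, fun i j hij => ?_⟩, by simp⟩
    exact absurd (Subsingleton.elim i j) hij

lemma Pminus_one_le (φ : EuclideanSpace ℝ (Fin N) → ℝ) (x : EuclideanSpace ℝ (Fin N))
    {ξ : EuclideanSpace ℝ (Fin N)} (hξ : ‖ξ‖ = 1) :
    Pminus 1 φ x ≤ iteratedFDeriv ℝ 2 φ x ![ξ, ξ] := by
  rw [Pminus_one_eq_sInf]
  refine csInf_le ⟨-‖iteratedFDeriv ℝ 2 φ x‖, ?_⟩ ⟨ξ, by simpa using hξ, rfl⟩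
  rintro _ ⟨η, hη, rfl⟩
  have := (iteratedFDeriv ℝ 2 φ x).le_opNorm ![η, η]
  simp only [Fin.prod_univ_two, Matrix.cons_val_zero, Matrix.cons_val_one,
    mem_sphere_zero_iff_norm.1 hη, mul_one, Real.norm_eq_abs] at this
  exact neg_le_of_abs_le this

lemma le_Pminus_one [NeZero N] {φ : EuclideanSpace ℝ (Fin N) → ℝ} {x : EuclideanSpace ℝ (Fin N)}
    {A : ℝ} (h : ∀ ξ : EuclideanSpace ℝ (Fin N), ‖ξ‖ = 1 → A ≤ iteratedFDeriv ℝ 2 φ x ![ξ, ξ]) :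
    A ≤ Pminus 1 φ x := by
  rw [Pminus_one_eq_sInf]
  refine le_csInf ((NormedSpace.sphere_nonempty.2 zero_le_one).image _) ?_
  rintro _ ⟨ξ, hξ, rfl⟩
  exact h ξ (mem_sphere_zero_iff_norm.1 hξ)

lemma Pminus_one_mono [NeZero N] {ψ φ : EuclideanSpace ℝ (Fin N) → ℝ}
    {x : EuclideanSpace ℝ (Fin N)}
    (h : ∀ ξ : EuclideanSpace ℝ (Fin N), ‖ξ‖ = 1 →
      iteratedFDeriv ℝ 2 ψ x ![ξ, ξ] ≤ iteratedFDeriv ℝ 2 φ x ![ξ, ξ]) :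
    Pminus 1 ψ x ≤ Pminus 1 φ x :=
  le_Pminus_one fun ξ hξ => (Pminus_one_le ψ x hξ).trans (h ξ hξ)

lemma Pminus_one_negCosNorm [NeZero N] {a c : ℝ} (ha : 0 ≤ a) (hc : 0 < c)
    {x : EuclideanSpace ℝ (Fin N)} (hx : c * ‖x‖ < π / 2) :
    Pminus 1 (negCosNorm a c) x = a * (c ^ 2 * cos (c * ‖x‖)) := by
  obtain ⟨ξ, hξ, heq⟩ := exists_iteratedFDeriv_two_negCosNorm_eq a c x
  exact le_antisymm (heq ▸ Pminus_one_le _ x hξ)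
    (le_Pminus_one fun η hη => mul_cos_le_iteratedFDeriv_two_negCosNorm ha hc hx hη)

lemma isViscSubsol_of_contDiffOn [NeZero N] {Ω : Set (EuclideanSpace ℝ (Fin N))}
    (hΩ : IsOpen Ω) {μ : ℝ} {ψ : EuclideanSpace ℝ (Fin N) → ℝ} (hψ : ContDiffOn ℝ 2 ψ Ω)
    (hsub : ∀ x ∈ Ω, 0 ≤ Pminus 1 ψ x + μ * ψ x) :
    IsViscSubsol (Pminus 1) Ω (fun _ _ => 0) μ (fun _ => 0) ψ := by
  intro x hx φ hφ hmax
  have hle : Pminus 1 ψ x ≤ Pminus 1 φ x :=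
    Pminus_one_mono fun ξ _ => iteratedFDeriv_two_le_of_isLocalMax_sub
      (hψ.contDiffAt (hΩ.mem_nhds hx)) hφ (hmax.isLocalMax (hΩ.mem_nhds hx)) ξ
  linarith [hsub x hx]

end Pminus

lemma IsCompact.exists_isMaxOn_add_mul_eq_zero {α : Type*} [TopologicalSpace α] {K : Set α}
    (hK : IsCompact K) {w g : α → ℝ} (hw : UpperSemicontinuousOn w K) (hw0 : ∀ y ∈ K, w y ≤ 0)
    (hg : ContinuousOn g K) (hg1 : ∀ y ∈ K, g y ≤ 1) {y₀ : α} (hy₀ : y₀ ∈ K) (hgy₀ : 0 < g y₀) :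
    ∃ t, 0 ≤ t ∧ ∃ x ∈ K, IsMaxOn (fun y => w y + t * g y) K x ∧ w x + t * g x = 0 := by
  set T := {t : ℝ | ∀ y ∈ K, w y + t * g y ≤ 0}
  have h0T : (0 : ℝ) ∈ T := fun y hy => by simpa using hw0 y hy
  have hT_bdd : BddAbove T :=
    ⟨-w y₀ / g y₀, fun t ht => by rw [le_div_iff₀ hgy₀]; linarith [ht y₀ hy₀]⟩
  have hT_closed : IsClosed T := by
    simp only [T, Set.ofPred_forall]
    exact isClosed_iInter fun y => isClosed_iInter fun _ =>
      isClosed_le (by fun_prop) continuous_const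
  have htT : sSup T ∈ T := hT_closed.csSup_mem ⟨0, h0T⟩ hT_bdd
  have hu : UpperSemicontinuousOn (fun y => w y + sSup T * g y) K :=
    hw.add (ContinuousOn.upperSemicontinuousOn (by fun_prop))
  obtain ⟨x, hxK, hxmax⟩ := hu.exists_isMaxOn ⟨y₀, hy₀⟩ hK
  refine ⟨sSup T, le_csSup hT_bdd h0T, x, hxK, hxmax, le_antisymm (htT x hxK) ?_⟩
  by_contra! hM
  -- a negative maximum `M` would let `sSup T - M` still lie in `T`
  have : sSup T - (w x + sSup T * g x) ∈ T := fun y hy => by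
    nlinarith [isMaxOn_iff.1 hxmax y hy, mul_nonneg (neg_nonneg.2 hM.le) (sub_nonneg.2 (hg1 y hy))]
  linarith [le_csSup hT_bdd this]

section Eigenvalue

variable {N : ℕ}

lemma mul_norm_lt_pi_div_two_of_mem_ball {E : Type*} [NormedAddCommGroup E] {R : ℝ} (hR : 0 < R)
    {x : E} (hx : x ∈ ball 0 R) : π / (2 * R) * ‖x‖ < π / 2 := by
  rw [mem_ball_zero_iff] at hx
  rw [div_mul_eq_mul_div, div_lt_div_iff₀ (by positivity) two_pos]
  nlinarith [pi_pos]

lemma le_sq_of_isViscSubsol [NeZero N] {Ω : Set (EuclideanSpace ℝ (Fin N))} {μ c : ℝ}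
    (hc : 0 < c) (hΩ : closedBall 0 (π / (2 * c)) ⊆ Ω) {w : EuclideanSpace ℝ (Fin N) → ℝ}
    (hw_usc : UpperSemicontinuousOn w Ω) (hw_neg : ∀ x ∈ Ω, w x < 0)
    (hw : IsViscSubsol (Pminus 1) Ω (fun _ _ => 0) μ (fun _ => 0) w) : μ ≤ c ^ 2 := by
  set ρ := π / (2 * c)
  have hcρ : c * ρ = π / 2 := by
    simp only [ρ]
    field_simp
  have hρ : 0 < ρ := by positivity
  obtain ⟨t, ht, x, hxK, hmax, hx0⟩ := (isCompact_closedBall 0 ρ).exists_isMaxOn_add_mul_eq_zero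
    (hw_usc.mono hΩ) (fun y hy => (hw_neg y (hΩ hy)).le) (g := fun y => cos (c * ‖y‖))
    (by fun_prop) (fun y _ => cos_le_one _) (mem_closedBall_self hρ.le) (by simp)
  have hpos : 0 < t * cos (c * ‖x‖) := by linarith [hw_neg x (hΩ hxK)]
  have hx_ball : ‖x‖ < ρ := by
    refine lt_of_le_of_ne (mem_closedBall_zero_iff.1 hxK) fun h => ?_
    rw [h, hcρ, cos_pi_div_two, mul_zero] at hpos
    exact lt_irrefl _ hpos
  have hx_lt : c * ‖x‖ < π / 2 := hcρ ▸ mul_lt_mul_of_pos_left hx_ball hc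
  have hloc : IsLocalMaxOn (fun y => w y - negCosNorm t c y) Ω x := by
    filter_upwards [mem_nhdsWithin_of_mem_nhds (isOpen_ball.mem_nhds
      (mem_ball_zero_iff.2 hx_ball))] with y hy
    have := isMaxOn_iff.1 hmax y (ball_subset_closedBall hy)
    simp only [negCosNorm] at this ⊢
    linarith
  have htest := hw x (hΩ hxK) _ (contDiff_negCosNorm t c).contDiffAt hloc
  rw [Pminus_one_negCosNorm ht hc hx_lt, show w x = -(t * cos (c * ‖x‖)) by linarith] at htest
  exact le_of_mul_le_mul_left (by linarith) hpos

lemma muMinus_one_ball [NeZero N] {R : ℝ} (hR : 0 < R) :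
    muMinus 1 (ball (0 : EuclideanSpace ℝ (Fin N)) R) (fun _ _ => 0) =
      (((π / (2 * R)) ^ 2 : ℝ) : EReal) := by
  have hc : 0 < π / (2 * R) := by positivity
  apply le_antisymm
  · refine sSup_le ?_
    rintro _ ⟨μ, rfl, w, hw_usc, hw_neg, hw⟩
    have hlim : Tendsto (fun c : ℝ => c ^ 2) (𝓝[>] (π / (2 * R))) (𝓝 ((π / (2 * R)) ^ 2)) :=
      ((continuous_pow 2).tendsto _).mono_left nhdsWithin_le_nhds
    refine EReal.coe_le_coe_iff.2
      (ge_of_tendsto hlim (eventually_nhdsWithin_of_forall fun c (hc' : π / (2 * R) < c) => ?_))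
    refine le_sq_of_isViscSubsol (hc.trans hc') (fun y hy => ?_) hw_usc hw_neg hw
    rw [mem_closedBall_zero_iff] at hy
    rw [mem_ball_zero_iff]
    refine hy.trans_lt ((div_lt_iff₀ (by linarith)).2 ?_)
    rw [div_lt_iff₀ (by positivity)] at hc'
    linarith
  · refine le_sSup ⟨_, rfl, negCosNorm 1 (π / (2 * R)),
      (contDiff_negCosNorm (n := 0) 1 _).continuous.continuousOn.upperSemicontinuousOn,
      fun x hx => negCosNorm_one_neg hc.le (mul_norm_lt_pi_div_two_of_mem_ball hR hx),
      isViscSubsol_of_contDiffOn isOpen_ball (contDiff_negCosNorm 1 _).contDiffOn fun x hx => ?_⟩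
    rw [Pminus_one_negCosNorm zero_le_one hc (mul_norm_lt_pi_div_two_of_mem_ball hR hx),
      negCosNorm]
    exact le_of_eq (by ring)

end Eigenvalue

/-- explicit principal eigenvalue and eigenfunction of `𝒫⁻₁` (with
`H ≡ 0`) in the ball `B_R(0)`: `ψ₁(x) = -cos(π|x|/(2R))` is a `C²` negative
eigenfunction and `μ₁⁻(B_R(0)) = (π/(2R))²`. -/
theorem statement19 {N : ℕ} (hN : 2 ≤ N) (R : ℝ) (hR : 0 < R) :
    (ContDiffOn ℝ 2
        (fun x : EuclideanSpace ℝ (Fin N) => -Real.cos (Real.pi * ‖x‖ / (2 * R)))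
        (closedBall (0 : EuclideanSpace ℝ (Fin N)) R) ∧
      (∀ x ∈ ball (0 : EuclideanSpace ℝ (Fin N)) R,
        -Real.cos (Real.pi * ‖x‖ / (2 * R)) < 0) ∧
      (∀ x ∈ sphere (0 : EuclideanSpace ℝ (Fin N)) R,
        -Real.cos (Real.pi * ‖x‖ / (2 * R)) = 0) ∧
      (∀ x ∈ ball (0 : EuclideanSpace ℝ (Fin N)) R,
        Pminus 1 (fun y : EuclideanSpace ℝ (Fin N) =>
            -Real.cos (Real.pi * ‖y‖ / (2 * R))) x
          + (Real.pi / (2 * R)) ^ 2 * (-Real.cos (Real.pi * ‖x‖ / (2 * R))) = 0)) ∧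
    muMinus 1 (ball (0 : EuclideanSpace ℝ (Fin N)) R) (fun _ _ => 0) =
      (((Real.pi / (2 * R)) ^ 2 : ℝ) : EReal) := by
  have : NeZero N := ⟨by omega⟩
  have hc : 0 < π / (2 * R) := by positivity
  have hψ : ∀ x : EuclideanSpace ℝ (Fin N),
      -Real.cos (π * ‖x‖ / (2 * R)) = negCosNorm 1 (π / (2 * R)) x := fun x => by
    rw [negCosNorm, one_mul, div_mul_eq_mul_div]
  simp only [hψ]
  refine ⟨⟨(contDiff_negCosNorm 1 _).contDiffOn,
    fun x hx => negCosNorm_one_neg hc.le (mul_norm_lt_pi_div_two_of_mem_ball hR hx),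
    fun x hx => ?_, fun x hx => ?_⟩, muMinus_one_ball hR⟩
  · rw [negCosNorm, mem_sphere_zero_iff_norm.1 hx, show π / (2 * R) * R = π / 2 by field_simp, cos_pi_div_two]
    simp
  · rw [Pminus_one_negCosNorm zero_le_one hc (mul_norm_lt_pi_div_two_of_mem_ball hR hx), negCosNorm]
    ring
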